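/- arXiv:0903.4504 — 3 statements merged into one kernel-verified Lean document; each statement's English description precedes it below -/
import Mathlib

section
/- Let P_1(d),...,P_ℓ(d) be polynomials with integer coefficients satisfying P_i(0)=0, write P_i(d) = ∑_{j=1}^{k} c_{ij} d^j, and let 𝒫 : ℤ^k → ℤ^ℓ be the linear map with matrix (c_{ij}). There exist constants c > 0 and C ≥ 1, depending only on the coefficients c_{ij}, such that for every positive integer N and every A ⊆ {1,...,N} with |A| = δN, there exist an integer N' ≤ CN and a vector m ∈ ℤ^ℓ such that the set B = {b ∈ [−N',N']^k : 𝒫(b) ∈ A^ℓ − m} satisfies |B| ≥ c δ^ℓ N^k. In particular, for every nonzero integer d, if (d, d², ..., d^k) ∈ B − B then (P_1(d),...,P_ℓ(d)) ∈ A^ℓ − A^ℓ. -/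
/-!
Take `N' = N` and `M = ∑ |c_{ij}|`. For `b ∈ [-N,N]^k` every coordinate of `𝒫 b` has size at
most `MN`, so the shifts `m` with `𝒫 b + m ∈ A^ℓ` are the `|A|^ℓ` vectors `a - 𝒫 b`, all lying in
the box `[1 - MN, N + MN]^ℓ` of `((2M+1)N)^ℓ` points. Averaging over that box gives a shift `m`
with `|B| ≥ (2N+1)^k |A|^ℓ / ((2M+1)N)^ℓ`. The second claim is just the linearity of `𝒫`.
-/

open Finset Pointwise
open scoped Matrix

section Shift

variable {α G : Type*} [AddCommGroup G] [DecidableEq G]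

lemma card_filter_add_mem_of_sub_mem {T X : Finset G} {g : G} (hT : ∀ x ∈ X, x - g ∈ T) :
    #{m ∈ T | g + m ∈ X} = #X :=
  card_nbij' (g + ·) (· - g) (fun m hm => (mem_filter.1 hm).2)
    (fun x hx => mem_filter.2 ⟨hT x hx, by simpa using hx⟩)
    (fun m _ => by simp) (fun x _ => by simp)

lemma sum_card_filter_add_mem {S : Finset α} {T X : Finset G} {f : α → G}
    (hT : ∀ b ∈ S, ∀ x ∈ X, x - f b ∈ T) :
    ∑ m ∈ T, #{b ∈ S | f b + m ∈ X} = #S * #X :=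
  calc ∑ m ∈ T, #{b ∈ S | f b + m ∈ X} = ∑ b ∈ S, #{m ∈ T | f b + m ∈ X} :=
        (sum_card_bipartiteAbove_eq_sum_card_bipartiteBelow _).symm
    _ = ∑ _b ∈ S, #X := sum_congr rfl fun b hb => card_filter_add_mem_of_sub_mem (hT b hb)
    _ = #S * #X := by rw [sum_const, smul_eq_mul]

lemma exists_card_mul_le_card_mul_card_filter_add_mem (S : Finset α) (X T : Finset G)
    (f : α → G) (hT : ∀ b ∈ S, ∀ x ∈ X, x - f b ∈ T) :
    ∃ m, #S * #X ≤ #T * #{b ∈ S | f b + m ∈ X} := by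
  have hsum := sum_card_filter_add_mem hT
  obtain rfl | hT₀ := T.eq_empty_or_nonempty
  · exact ⟨0, by simp_all⟩
  obtain ⟨m, -, hm⟩ := exists_le_of_sum_le hT₀ (f := fun _ => #S * #X)
    (g := fun m => #T * #{b ∈ S | f b + m ∈ X}) (by rw [sum_const, ← mul_sum, hsum, smul_eq_mul])
  exact ⟨m, hm⟩

lemma map_mem_sub_of_mem_filter_sub {H : Type*} [AddCommGroup H] [DecidableEq H]
    (φ : G →+ H) (S : Finset G) (X : Finset H) (m : H) {x : G}
    (hx : x ∈ {b ∈ S | φ b + m ∈ X} - {b ∈ S | φ b + m ∈ X}) : φ x ∈ X - X := by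
  obtain ⟨a, ha, b, hb, rfl⟩ := mem_sub.1 hx
  exact mem_sub.2 ⟨φ a + m, (mem_filter.1 ha).2, φ b + m, (mem_filter.1 hb).2, by
    rw [map_sub]; abel⟩

end Shift

lemma abs_mulVec_apply_le {m n R : Type*} [Fintype n] [CommRing R] [LinearOrder R]
    [IsStrictOrderedRing R] (c : Matrix m n R) {v : n → R} {r : R} (hv : ∀ j, |v j| ≤ r)
    (i : m) : |(c *ᵥ v) i| ≤ (∑ j, |c i j|) * r :=
  calc |(c *ᵥ v) i| ≤ ∑ j, |c i j * v j| := abs_sum_le_sum_abs _ _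
    _ ≤ ∑ j, |c i j| * r := sum_le_sum fun j _ => by
        rw [abs_mul]; exact mul_le_mul_of_nonneg_left (hv j) (abs_nonneg _)
    _ = (∑ j, |c i j|) * r := (sum_mul ..).symm

section Box

variable {m n : Type*} [Fintype m] [Fintype n]

lemma abs_mulVec_apply_le_sum_natAbs_mul (c : Matrix m n ℤ) {v : n → ℤ} {N : ℕ}
    (hv : ∀ j, |v j| ≤ N) (i : m) :
    |(c *ᵥ v) i| ≤ ((∑ i, ∑ j, (c i j).natAbs) * N : ℕ) := by
  refine (abs_mulVec_apply_le c hv i).trans ?_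
  push_cast
  gcongr
  exact single_le_sum (f := fun i => ∑ j, |c i j|) (fun i _ => by positivity) (mem_univ i)

lemma sub_mulVec_mem_piFinset_Icc [DecidableEq m] [DecidableEq n] (c : Matrix m n ℤ) {N : ℕ}
    {A : Finset ℤ} (hA : A ⊆ Icc 1 (N : ℤ)) {b : n → ℤ}
    (hb : b ∈ Fintype.piFinset fun _ => Icc (-(N : ℤ)) N) {x : m → ℤ}
    (hx : x ∈ Fintype.piFinset fun _ => A) {R : ℕ} (hR : (∑ i, ∑ j, (c i j).natAbs) * N ≤ R) :
    x - c *ᵥ b ∈ Fintype.piFinset fun _ => Icc (1 - (R : ℤ)) (N + R) := by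
  refine Fintype.mem_piFinset.2 fun i => ?_
  have hxi := mem_Icc.1 (hA (Fintype.mem_piFinset.1 hx i))
  have hbi := abs_le.1 ((abs_mulVec_apply_le_sum_natAbs_mul c
    (fun j => abs_le.2 (mem_Icc.1 (Fintype.mem_piFinset.1 hb j))) i).trans (Int.ofNat_le.2 hR))
  simp only [Pi.sub_apply, mem_Icc]
  constructor <;> linarith

end Box

lemma card_piFinset_Icc_neg (k N : ℕ) :
    #(Fintype.piFinset fun _ : Fin k => Icc (-(N : ℤ)) N) = (2 * N + 1) ^ k := by
  rw [Fintype.card_piFinset_const, Int.card_Icc]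
  congr
  omega

lemma card_piFinset_Icc_sub_add (ℓ N R : ℕ) :
    #(Fintype.piFinset fun _ : Fin ℓ => Icc (1 - (R : ℤ)) (N + R)) = (N + 2 * R) ^ ℓ := by
  rw [Fintype.card_piFinset_const, Int.card_Icc]
  congr
  omega

lemma one_div_pow_mul_div_pow_mul_pow_le {ℓ k : ℕ} {N K a b : ℝ} (hN : 0 < N) (hK : 0 < K)
    (h : N ^ k * a ^ ℓ ≤ (K * N) ^ ℓ * b) : 1 / K ^ ℓ * (a / N) ^ ℓ * N ^ k ≤ b := by
  have : 1 / K ^ ℓ * (a / N) ^ ℓ * N ^ k = N ^ k * a ^ ℓ / (K * N) ^ ℓ := by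
    rw [div_pow, mul_pow]
    field_simp
  rw [this, div_le_iff₀ (by positivity)]
  linarith

theorem stmt_13_general (ℓ k : ℕ) (c : Fin ℓ → Fin k → ℤ) :
    ∃ c₀ C : ℝ, 0 < c₀ ∧ 1 ≤ C ∧ ∀ N : ℕ, 0 < N → ∀ A : Finset ℤ,
      A ⊆ Finset.Icc 1 (N : ℤ) → ∀ δ : ℝ, δ = (A.card : ℝ) / N →
      ∃ (N' : ℕ) (m : Fin ℓ → ℤ), (N' : ℝ) ≤ C * N ∧
        ∀ B : Finset (Fin k → ℤ),
          B = (Fintype.piFinset fun _ : Fin k => Finset.Icc (-(N' : ℤ)) (N' : ℤ)).filter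
                (fun b => ∀ i : Fin ℓ, (∑ j : Fin k, c i j * b j) + m i ∈ A) →
          (c₀ * δ ^ ℓ * (N : ℝ) ^ k ≤ (B.card : ℝ)) ∧
          (∀ d : ℤ, d ≠ 0 → (fun j : Fin k => d ^ (j.1 + 1)) ∈ B - B →
            (fun i : Fin ℓ => ∑ j : Fin k, c i j * d ^ (j.1 + 1)) ∈
              (Fintype.piFinset fun _ : Fin ℓ => A) -
                (Fintype.piFinset fun _ : Fin ℓ => A)) := by
  set M : ℕ := ∑ i, ∑ j, (c i j).natAbs
  refine ⟨1 / (2 * M + 1 : ℝ) ^ ℓ, 1, by positivity, le_rfl, fun N hN A hA δ hδ => ?_⟩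
  set Aℓ := Fintype.piFinset fun _ : Fin ℓ => A
  set Box := Fintype.piFinset fun _ : Fin k => Icc (-(N : ℤ)) N
  obtain ⟨m, hm⟩ := exists_card_mul_le_card_mul_card_filter_add_mem Box Aℓ _ (c *ᵥ ·)
    fun _ hb _ hx => sub_mulVec_mem_piFinset_Icc c hA hb hx le_rfl
  refine ⟨N, m, by simp, fun B hB => ?_⟩
  obtain rfl : B = {b ∈ Box | c *ᵥ b + m ∈ Aℓ} := by
    rw [hB]; ext; simp [Aℓ, Box, Matrix.mulVec, dotProduct]
  refine ⟨?_, fun d _ hd =>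
    map_mem_sub_of_mem_filter_sub (Matrix.mulVecLin c).toAddMonoidHom Box Aℓ m hd⟩
  rw [card_piFinset_Icc_neg, Fintype.card_piFinset_const, card_piFinset_Icc_sub_add] at hm
  rw [show N + 2 * (M * N) = (2 * M + 1) * N by ring] at hm
  rw [hδ]
  refine one_div_pow_mul_div_pow_mul_pow_le (by positivity) (by positivity) ?_
  calc (N : ℝ) ^ k * #A ^ ℓ ≤ (2 * N + 1) ^ k * #A ^ ℓ := by gcongr; linarith
    _ ≤ ((2 * M + 1) * N) ^ ℓ * #{b ∈ Box | c *ᵥ b + m ∈ Aℓ} := by exact_mod_cast hm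

/-- **The lifting argument.** Write `P_i(d) = ∑_{j=1}^k c_{ij} d^j` and let
`𝒫 : ℤ^k → ℤ^ℓ` be the linear map `(𝒫 b)_i = ∑_j c_{ij} b_j`.  There are constants
`c > 0` and `C ≥ 1` (depending only on the coefficients) such that: for every `N` and
`A ⊆ [1,N]` with `|A| = δN`, there are `N' ≤ CN` and `m ∈ ℤ^ℓ` such that
`B = {b ∈ [-N',N']^k : 𝒫(b) ∈ A^ℓ - m}` has `|B| ≥ c δ^ℓ N^k`; in particular, for every
nonzero `d`, if `(d,d²,…,d^k) ∈ B - B` then `(P₁(d),…,P_ℓ(d)) ∈ A^ℓ - A^ℓ`. -/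
theorem stmt_13 (ℓ k : ℕ) (hℓ : 0 < ℓ) (hk : 0 < k) (c : Fin ℓ → Fin k → ℤ) :
    ∃ c₀ C : ℝ, 0 < c₀ ∧ 1 ≤ C ∧ ∀ N : ℕ, 0 < N → ∀ A : Finset ℤ,
      A ⊆ Finset.Icc 1 (N : ℤ) → ∀ δ : ℝ, δ = (A.card : ℝ) / N →
      ∃ (N' : ℕ) (m : Fin ℓ → ℤ), (N' : ℝ) ≤ C * N ∧
        ∀ B : Finset (Fin k → ℤ),
          B = (Fintype.piFinset fun _ : Fin k => Finset.Icc (-(N' : ℤ)) (N' : ℤ)).filter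
                (fun b => ∀ i : Fin ℓ, (∑ j : Fin k, c i j * b j) + m i ∈ A) →
          (c₀ * δ ^ ℓ * (N : ℝ) ^ k ≤ (B.card : ℝ)) ∧
          (∀ d : ℤ, d ≠ 0 → (fun j : Fin k => d ^ (j.1 + 1)) ∈ B - B →
            (fun i : Fin ℓ => ∑ j : Fin k, c i j * d ^ (j.1 + 1)) ∈
              (Fintype.piFinset fun _ : Fin ℓ => A) -
                (Fintype.piFinset fun _ : Fin ℓ => A)) :=
  stmt_13_general ℓ k c
end

section
/- Let k ≥ 2, Q_M = [1,M] × [1,M²] × ⋯ × [1,M^k], ε = (10k)^{-1}, and S = {(d, d², ..., d^k) : 1 ≤ d ≤ εM}. Let B ⊆ Q_M, δ = |B|/|Q_M|, f_B = 1_B − δ·1_{Q_M}, and B' = B ∩ ((εM, (1−ε)M] × (εM², (1−ε)M²] × ⋯ × (εM^k, (1−ε)M^k]). If ∑_{m,n ∈ ℤ^k} 1_B(m) 1_B(n) 1_S(m−n) ≤ (1/4) δ |B| |S| and |B'| ≥ (3/4)|B|, then ∑_{m,n ∈ ℤ^k} f_B(m) f_B(n) 1_S(m−n) ≤ −(1/4)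 δ |B| |S|. -/
/-!
Expanding `f_B(m) f_B(n) = (1_B(m) - δ)(1_B(n) - δ)` splits the sum into four counts,
`∑_{B×B} 1_S(m-n) - δ ∑_{m∈B} #{n ∈ Q : m-n ∈ S} - δ ∑_{n∈B} #{m ∈ Q : m-n ∈ S}`
`+ δ² ∑_{m∈Q} #{n ∈ Q : m-n ∈ S}`.
Every row count is at most `|S|`, so the last term is at most `δ²|Q||S| = δ|B||S|`. For points of
`B'` the whole translates `m - S` and `m + S` stay inside `Q_M`, because the entries of `S` are at
most `εM^j`, so the two middle counts are at least `|B'||S| ≥ (3/4)|B||S|` each. Altogether the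
sum is at most `(1/4 - 3/4 - 3/4 + 1) δ|B||S|`.
-/

open Finset

/-- The box `Q_M = [1,M] × [1,M²] × ⋯ × [1,M^k] ⊆ ℤ^k`. -/
noncomputable def QM (k M : ℕ) : Finset (Fin k → ℤ) :=
  Fintype.piFinset fun j : Fin k => Finset.Icc 1 ((M : ℤ) ^ (j.1 + 1))

/-- The curve `S = {(d,d²,…,d^k) : 1 ≤ d ≤ εM}` with `ε = (10k)⁻¹`. -/
def SF (k M : ℕ) : Finset (Fin k → ℤ) :=
  (Finset.Icc 1 (M / (10 * k))).image fun d : ℕ => fun j : Fin k => (d : ℤ) ^ (j.1 + 1)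

lemma density_mul_card_eq {α : Type*} {Q B : Finset α} (hB : B ⊆ Q) :
    (#B / #Q : ℝ) * #Q = #B := by
  rcases (#Q).eq_zero_or_pos with hQ | hQ
  · simp [hQ, Nat.eq_zero_of_le_zero (hQ ▸ card_le_card hB)]
  · field_simp

section Expansion

variable {α : Type*} [DecidableEq α] {Q B : Finset α}

lemma sum_ite_mem_mul_of_subset (hB : B ⊆ Q) (f : α → ℝ) :
    ∑ m ∈ Q, (if m ∈ B then 1 else 0) * f m = ∑ m ∈ B, f m := by
  simp only [ite_mul, one_mul, zero_mul, sum_ite_mem, inter_eq_right.2 hB]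

lemma sum_sum_balance_mul_eq (hB : B ⊆ Q) (δ : ℝ) (g : α → α → ℝ) :
    ∑ m ∈ Q, ∑ n ∈ Q,
        ((if m ∈ B then 1 else 0) - δ) * ((if n ∈ B then 1 else 0) - δ) * g m n =
      ∑ m ∈ B, ∑ n ∈ B, g m n - δ * ∑ m ∈ B, ∑ n ∈ Q, g m n
        - δ * ∑ m ∈ Q, ∑ n ∈ B, g m n + δ ^ 2 * ∑ m ∈ Q, ∑ n ∈ Q, g m n := by
  have hterm : ∀ m n,
      ((if m ∈ B then (1 : ℝ) else 0) - δ) * ((if n ∈ B then 1 else 0) - δ) * g m n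
        = (if m ∈ B then 1 else 0) * ((if n ∈ B then 1 else 0) * g m n)
          - δ * ((if m ∈ B then 1 else 0) * g m n) - δ * ((if n ∈ B then 1 else 0) * g m n)
          + δ ^ 2 * g m n := fun m n => by ring
  simp only [hterm, sum_add_distrib, sum_sub_distrib, ← mul_sum, sum_ite_mem_mul_of_subset hB]

end Expansion

section BalanceSum

variable {G : Type*} [AddCommGroup G] [DecidableEq G] (Q S : Finset G)

lemma card_filter_sub_mem_le (m : G) : #{n ∈ Q | m - n ∈ S} ≤ #S :=
  card_le_card_of_injOn (m - ·) (fun _ hn => (mem_filter.1 hn).2)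
    fun _ _ _ _ h => sub_right_injective h

lemma card_le_card_filter_sub_mem {m : G} (hm : ∀ s ∈ S, m - s ∈ Q) :
    #S ≤ #{n ∈ Q | m - n ∈ S} :=
  card_le_card_of_injOn (m - ·)
    (fun s (hs : s ∈ S) =>
      mem_filter.2 ⟨hm s hs, by simpa only [sub_sub_cancel] using hs⟩)
    fun _ _ _ _ h => sub_right_injective h

lemma card_le_card_filter_sub_mem_left {n : G} (hn : ∀ s ∈ S, n + s ∈ Q) :
    #S ≤ #{m ∈ Q | m - n ∈ S} :=
  card_le_card_of_injOn (n + ·)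
    (fun s (hs : s ∈ S) =>
      mem_filter.2 ⟨hn s hs, by simpa only [add_sub_cancel_left] using hs⟩)
    fun _ _ _ _ h => add_right_injective n h

lemma sum_sum_sub_mem_le :
    ∑ m ∈ Q, ∑ n ∈ Q, (if m - n ∈ S then (1 : ℝ) else 0) ≤ #Q * #S := by
  calc ∑ m ∈ Q, ∑ n ∈ Q, (if m - n ∈ S then (1 : ℝ) else 0) ≤ ∑ _m ∈ Q, (#S : ℝ) :=
        sum_le_sum fun m _ => by
          rw [sum_boole]; exact_mod_cast card_filter_sub_mem_le Q S m
    _ = #Q * #S := by rw [sum_const, nsmul_eq_mul]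

variable {Q S} {B B' : Finset G}

lemma card_mul_card_le_sum_sum_sub_mem (hB' : B' ⊆ B)
    (hQ : ∀ m ∈ B', ∀ s ∈ S, m - s ∈ Q) :
    (#B' * #S : ℝ) ≤ ∑ m ∈ B, ∑ n ∈ Q, if m - n ∈ S then 1 else 0 := by
  calc (#B' * #S : ℝ) = #B' • (#S : ℝ) := (nsmul_eq_mul _ _).symm
    _ ≤ ∑ m ∈ B', ∑ n ∈ Q, if m - n ∈ S then 1 else 0 :=
        card_nsmul_le_sum _ _ _ fun m hm => by
          rw [sum_boole]; exact_mod_cast card_le_card_filter_sub_mem Q S (hQ m hm)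
    _ ≤ _ := sum_le_sum_of_subset_of_nonneg hB' fun _ _ _ =>
        sum_nonneg fun _ _ => by positivity

lemma card_mul_card_le_sum_sum_sub_mem_left (hB' : B' ⊆ B)
    (hQ : ∀ n ∈ B', ∀ s ∈ S, n + s ∈ Q) :
    (#B' * #S : ℝ) ≤ ∑ m ∈ Q, ∑ n ∈ B, if m - n ∈ S then 1 else 0 := by
  rw [sum_comm]
  calc (#B' * #S : ℝ) = #B' • (#S : ℝ) := (nsmul_eq_mul _ _).symm
    _ ≤ ∑ n ∈ B', ∑ m ∈ Q, if m - n ∈ S then 1 else 0 :=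
        card_nsmul_le_sum _ _ _ fun n hn => by
          rw [sum_boole]; exact_mod_cast card_le_card_filter_sub_mem_left Q S (hQ n hn)
    _ ≤ _ := sum_le_sum_of_subset_of_nonneg hB' fun _ _ _ =>
        sum_nonneg fun _ _ => by positivity

theorem sum_sum_balance_le (hB : B ⊆ Q) (hB' : B' ⊆ B)
    (hshift : ∀ m ∈ B', ∀ s ∈ S, m - s ∈ Q ∧ m + s ∈ Q) {δ : ℝ} (hδ : δ = #B / #Q) :
    ∑ m ∈ Q, ∑ n ∈ Q, ((if m ∈ B then 1 else 0) - δ) * ((if n ∈ B then 1 else 0) - δ) *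
        (if m - n ∈ S then 1 else 0) ≤
      ∑ m ∈ B, ∑ n ∈ B, (if m - n ∈ S then 1 else 0) - 2 * δ * #B' * #S + δ * #B * #S := by
  have hδ0 : 0 ≤ δ := hδ ▸ by positivity
  have hrows := mul_le_mul_of_nonneg_left
    (card_mul_card_le_sum_sum_sub_mem hB' fun m hm s hs => (hshift m hm s hs).1) hδ0
  have hcols := mul_le_mul_of_nonneg_left
    (card_mul_card_le_sum_sum_sub_mem_left hB' fun m hm s hs => (hshift m hm s hs).2) hδ0
  have hall :
      δ ^ 2 * ∑ m ∈ Q, ∑ n ∈ Q, (if m - n ∈ S then (1 : ℝ) else 0) ≤ δ * #B * #S := by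
    calc _ ≤ δ ^ 2 * (#Q * #S) :=
          mul_le_mul_of_nonneg_left (sum_sum_sub_mem_le Q S) (by positivity)
      _ = δ * (δ * #Q) * #S := by ring
      _ = δ * #B * #S := by rw [hδ, density_mul_card_eq hB]
  rw [sum_sum_balance_mul_eq hB]
  linarith

end BalanceSum

lemma one_le_apply_of_mem_SF {k M : ℕ} {s : Fin k → ℤ} (hs : s ∈ SF k M) (j : Fin k) :
    1 ≤ s j := by
  obtain ⟨d, hd, rfl⟩ := mem_image.1 hs
  exact one_le_pow₀ (by exact_mod_cast (mem_Icc.1 hd).1)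

lemma apply_le_of_mem_SF {k M : ℕ} {s : Fin k → ℤ} (hs : s ∈ SF k M) (j : Fin k) :
    (s j : ℝ) ≤ 1 / (10 * (k : ℝ)) * (M : ℝ) ^ (j.1 + 1) := by
  obtain ⟨d, hd, rfl⟩ := mem_image.1 hs
  have hk : (1 : ℝ) ≤ k := by exact_mod_cast j.pos
  have hε : 1 / (10 * (k : ℝ)) ≤ 1 := by rw [div_le_one (by positivity)]; linarith
  have hd : (d : ℝ) ≤ 1 / (10 * (k : ℝ)) * M := by
    calc (d : ℝ) ≤ ((M / (10 * k) : ℕ) : ℝ) := by exact_mod_cast (mem_Icc.1 hd).2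
      _ ≤ M / (10 * k : ℕ) := Nat.cast_div_le
      _ = 1 / (10 * (k : ℝ)) * M := by push_cast; ring
  push_cast
  calc (d : ℝ) ^ (j.1 + 1) ≤ (1 / (10 * (k : ℝ)) * M) ^ (j.1 + 1) := by gcongr
    _ = (1 / (10 * (k : ℝ))) ^ (j.1 + 1) * (M : ℝ) ^ (j.1 + 1) := mul_pow _ _ _
    _ ≤ 1 / (10 * (k : ℝ)) * (M : ℝ) ^ (j.1 + 1) := by
        gcongr; exact pow_le_of_le_one (by positivity) hε (Nat.succ_ne_zero _)

lemma sub_mem_QM_and_add_mem_QM {k M : ℕ} {m s : Fin k → ℤ}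
    (hm : ∀ j : Fin k, 1 / (10 * (k : ℝ)) * (M : ℝ) ^ (j.1 + 1) < (m j : ℝ) ∧
      (m j : ℝ) ≤ (1 - 1 / (10 * (k : ℝ))) * (M : ℝ) ^ (j.1 + 1))
    (hs : s ∈ SF k M) : m - s ∈ QM k M ∧ m + s ∈ QM k M := by
  have hcoord : ∀ j : Fin k, s j < m j ∧ m j + s j ≤ (M : ℤ) ^ (j.1 + 1) := fun j => by
    have hs2 := apply_le_of_mem_SF hs j
    have hε : 0 ≤ 1 / (10 * (k : ℝ)) := by positivity
    constructor
    · exact_mod_cast hs2.trans_lt (hm j).1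
    · exact_mod_cast (show (m j + s j : ℝ) ≤ (M : ℝ) ^ (j.1 + 1) by linarith [(hm j).2])
  simp only [QM, Fintype.mem_piFinset, mem_Icc, Pi.sub_apply, Pi.add_apply]
  refine ⟨fun j => ⟨?_, ?_⟩, fun j => ⟨?_, ?_⟩⟩ <;>
    linarith [hcoord j, one_le_apply_of_mem_SF hs j]

theorem stmt_15_general (k M : ℕ)
    (B : Finset (Fin k → ℤ)) (hB : B ⊆ QM k M)
    (δ : ℝ) (hδ : δ = (B.card : ℝ) / ((QM k M).card : ℝ))
    (h1 : ∑ m ∈ B, ∑ n ∈ B, (if m - n ∈ SF k M then (1 : ℝ) else 0) ≤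
      (1 / 4) * δ * B.card * ((SF k M).card : ℝ))
    (h2 : (3 / 4) * (B.card : ℝ) ≤
      ((B.filter fun m => ∀ j : Fin k,
        (1 / (10 * (k : ℝ))) * (M : ℝ) ^ (j.1 + 1) < (m j : ℝ) ∧
        (m j : ℝ) ≤ (1 - 1 / (10 * (k : ℝ))) * (M : ℝ) ^ (j.1 + 1)).card : ℝ)) :
    ∑ m ∈ QM k M, ∑ n ∈ QM k M,
        ((if m ∈ B then (1 : ℝ) else 0) - δ) * ((if n ∈ B then (1 : ℝ) else 0) - δ) *
          (if m - n ∈ SF k M then (1 : ℝ) else 0) ≤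
      -((1 / 4) * δ * B.card * ((SF k M).card : ℝ)) := by
  have hbalance := sum_sum_balance_le hB (filter_subset _ B)
    (fun m hm _ hs => sub_mem_QM_and_add_mem_QM (mem_filter.1 hm).2 hs) hδ
  have hδ0 : 0 ≤ δ := hδ ▸ by positivity
  have hB' := mul_le_mul_of_nonneg_left h2 (by positivity : 0 ≤ 2 * δ * (SF k M).card)
  linarith

/-- **Balance function estimate (4).** If
`∑_{m,n} 1_B(m)1_B(n)1_S(m-n) ≤ (1/4)δ|B||S|` (non-randomness) and `|B'| ≥ (3/4)|B|`
(where `B'` is the part of `B` in the `ε`-shrunk box), then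
`∑_{m,n} f_B(m)f_B(n)1_S(m-n) ≤ -(1/4)δ|B||S|`, where `f_B = 1_B - δ·1_{Q_M}`
(the sums range over `ℤ^k`, but all summands vanish off `Q_M`). -/
theorem stmt_15 (k M : ℕ) (hk : 2 ≤ k) (hM : 0 < M)
    (B : Finset (Fin k → ℤ)) (hB : B ⊆ QM k M)
    (δ : ℝ) (hδ : δ = (B.card : ℝ) / ((QM k M).card : ℝ))
    (h1 : ∑ m ∈ B, ∑ n ∈ B, (if m - n ∈ SF k M then (1 : ℝ) else 0) ≤
      (1 / 4) * δ * B.card * ((SF k M).card : ℝ))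
    (h2 : (3 / 4) * (B.card : ℝ) ≤
      ((B.filter fun m => ∀ j : Fin k,
        (1 / (10 * (k : ℝ))) * (M : ℝ) ^ (j.1 + 1) < (m j : ℝ) ∧
        (m j : ℝ) ≤ (1 - 1 / (10 * (k : ℝ))) * (M : ℝ) ^ (j.1 + 1)).card : ℝ)) :
    ∑ m ∈ QM k M, ∑ n ∈ QM k M,
        ((if m ∈ B then (1 : ℝ) else 0) - δ) * ((if n ∈ B then (1 : ℝ) else 0) - δ) *
          (if m - n ∈ SF k M then (1 : ℝ) else 0) ≤
      -((1 / 4) * δ * B.card * ((SF k M).card : ℝ)) :=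
  stmt_15_general k M B hB δ hδ h1 h2
end

section
/- Let k ≥ 2 and for β = (β_1,...,β_k) ∈ ℝ^k and a positive integer N define v_N(β) = ∫_0^N e^{2πi(β_1 x + β_2 x² + ⋯ + β_k x^k)} dx. Then there exists a constant C > 0 depending only on k such that |v_N(β)| ≤ C N (1 + ∑_{j=1}^{k} N^j |β_j|)^{−1/k} for all β ∈ ℝ^k and all positive integers N. -/
/-!
The substitution `x = N t` turns the integral into `N ∫₀¹ e(Q t) dt` with
`Q t = ∑ αⱼ t^(j+1)` and `αⱼ = βⱼ N^(j+1)`, so it suffices to bound the integral over `[0, 1]`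
by `C (1 + ∑ |αⱼ|)^(-1/k)`. When all coefficients are small the trivial bound `1` does.
Otherwise take the index `i` maximising `|αᵢ| Bⁱ` with `B = 2 (k+1)!`: every later coefficient
is at most `|αᵢ| / B`, so the `(i+1)`-st derivative of `2π Q` has absolute value at least
`π |αᵢ|` on `[0, 1]`, and van der Corput's lemma gives the decay
`|αᵢ|^(-1/(i+1)) ≤ |αᵢ|^(-1/k)`.

Van der Corput's lemma for the `m`-th derivative (`m ≥ 2`) goes by induction on `m`: if
`|g'| ≥ λ` for `g = φ^(m-1)`, then `|g x| ≥ λ |x - c|` for some `c`; outside `[c - δ, c + δ]`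
the bound `|g| ≥ λ δ` feeds the case `m - 1`, and `δ = λ^(-1/m)` balances the two
contributions. At the bottom sits the first-derivative test: one integration by parts leaves
`∫ |φ''| / φ'^2`, which is at most `1 / λ` either because `φ'` is monotone or, in the case
`i = 0` above, because `φ''` is small.
-/

open Finset intervalIntegral Set Nat

lemma forall_pos_or_forall_neg_of_ne_zero {g : ℝ → ℝ} {a b : ℝ} (hg : ContinuousOn g (Icc a b))
    (h0 : ∀ x ∈ Icc a b, g x ≠ 0) :
    (∀ x ∈ Icc a b, 0 < g x) ∨ (∀ x ∈ Icc a b, g x < 0) := by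
  by_contra! ⟨⟨x, hx, hgx⟩, ⟨y, hy, hgy⟩⟩
  have hxy : uIcc x y ⊆ Icc a b := uIcc_subset_Icc hx hy
  obtain ⟨z, hz, hgz⟩ :=
    intermediate_value_uIcc (hg.mono hxy) (mem_uIcc.2 (Or.inl ⟨hgx, hgy⟩))
  exact h0 z (hxy hz) hgz

lemma norm_integral_cexp_le_add_integral_abs_div_sq {F₀ F₁ F₂ : ℝ → ℝ} {a b lam : ℝ}
    (hab : a ≤ b) (hlam : 0 < lam) (hF₀ : ∀ x, HasDerivAt F₀ (F₁ x) x)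
    (hF₁ : ∀ x, HasDerivAt F₁ (F₂ x) x) (hF₂ : Continuous F₂)
    (hl : ∀ x ∈ Icc a b, lam ≤ |F₁ x|) :
    ‖∫ x in a..b, Complex.exp (Complex.I * F₀ x)‖ ≤ 2 / lam + ∫ x in a..b, |F₂ x| / F₁ x ^ 2 := by
  rw [← uIcc_of_le hab] at hl
  have hne : ∀ x ∈ uIcc a b, F₁ x ≠ 0 := fun x hx h => by
    linarith [hl x hx, show |F₁ x| = 0 by simp [h]]
  have hF₀c : Continuous F₀ := continuous_iff_continuousAt.2 fun x => (hF₀ x).continuousAt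
  have hF₁c : Continuous F₁ := continuous_iff_continuousAt.2 fun x => (hF₁ x).continuousAt
  set v : ℝ → ℂ := fun x => Complex.exp (Complex.I * F₀ x)
  set u : ℝ → ℂ := fun x => ((F₁ x)⁻¹ : ℝ) * -Complex.I
  set u' : ℝ → ℂ := fun x => ((-F₂ x / F₁ x ^ 2 : ℝ) : ℂ) * -Complex.I
  have hv : ∀ x, ‖v x‖ = 1 := fun x => by simp [v, Complex.norm_exp]
  have hvd : ∀ x ∈ uIcc a b, HasDerivAt v (Complex.I * F₁ x * v x) x := fun x _ => by
    simpa [mul_comm] using (((hF₀ x).ofReal_comp).const_mul Complex.I).cexp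
  have hud : ∀ x ∈ uIcc a b, HasDerivAt u (u' x) x := fun x hx =>
    (((hF₁ x).inv (hne x hx)).ofReal_comp).mul_const _
  have hu'int : IntervalIntegrable u' MeasureTheory.volume a b := by
    refine ContinuousOn.intervalIntegrable ?_
    have : ContinuousOn (fun x => -F₂ x / F₁ x ^ 2) (uIcc a b) :=
      hF₂.neg.continuousOn.div (hF₁c.pow 2).continuousOn fun x hx => pow_ne_zero 2 (hne x hx)
    exact (Complex.continuous_ofReal.comp_continuousOn this).mul continuousOn_const
  have hparts := integral_mul_deriv_eq_deriv_mul hud hvd hu'int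
    (Continuous.intervalIntegrable (by simp only [v]; fun_prop) a b)
  have hbdry : ∀ x ∈ uIcc a b, ‖u x * v x‖ ≤ 1 / lam := fun x hx => by
    simpa [u, hv, abs_inv] using inv_anti₀ hlam (hl x hx)
  have hrem : ‖∫ x in a..b, u' x * v x‖ ≤ ∫ x in a..b, |F₂ x| / F₁ x ^ 2 := by
    refine (norm_integral_le_integral_norm hab).trans_eq (integral_congr fun x _ => ?_)
    simp [u', hv]
  have hcongr : ∫ x in a..b, v x = ∫ x in a..b, u x * (Complex.I * F₁ x * v x) :=
    integral_congr fun x hx => by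
      have : (F₁ x : ℂ) ≠ 0 := by exact_mod_cast hne x hx
      simp only [u]
      push_cast
      field_simp
      rw [Complex.I_sq]
      ring
  rw [hcongr, hparts]
  calc ‖u b * v b - u a * v a - ∫ x in a..b, u' x * v x‖
      ≤ ‖u b * v b‖ + ‖u a * v a‖ + ‖∫ x in a..b, u' x * v x‖ :=
        (norm_sub_le _ _).trans (by gcongr; exact norm_sub_le _ _)
    _ ≤ 1 / lam + 1 / lam + ∫ x in a..b, |F₂ x| / F₁ x ^ 2 := by
        gcongr
        exacts [hbdry b right_mem_uIcc, hbdry a left_mem_uIcc]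
    _ = 2 / lam + ∫ x in a..b, |F₂ x| / F₁ x ^ 2 := by ring

lemma norm_integral_cexp_le_of_deriv_sign {F₀ F₁ F₂ : ℝ → ℝ} {a b lam : ℝ}
    (hab : a ≤ b) (hlam : 0 < lam) (hF₀ : ∀ x, HasDerivAt F₀ (F₁ x) x)
    (hF₁ : ∀ x, HasDerivAt F₁ (F₂ x) x) (hF₂ : Continuous F₂)
    (hl : ∀ x ∈ Icc a b, lam ≤ |F₁ x|)
    (hsgn : (∀ x ∈ Icc a b, 0 ≤ F₂ x) ∨ (∀ x ∈ Icc a b, F₂ x ≤ 0)) :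
    ‖∫ x in a..b, Complex.exp (Complex.I * F₀ x)‖ ≤ 3 / lam := by
  have hF₁c : Continuous F₁ := continuous_iff_continuousAt.2 fun x => (hF₁ x).continuousAt
  have hne : ∀ x ∈ Icc a b, F₁ x ≠ 0 := fun x hx h => by
    linarith [hl x hx, show |F₁ x| = 0 by simp [h]]
  rw [← uIcc_of_le hab] at hne hsgn
  have hftc : ∫ x in a..b, F₂ x / F₁ x ^ 2 = (F₁ a)⁻¹ - (F₁ b)⁻¹ := by
    have hderiv : ∀ x ∈ uIcc a b, HasDerivAt (fun y => -(F₁ y)⁻¹) (F₂ x / F₁ x ^ 2) x :=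
      fun x hx => by simpa [neg_div] using ((hF₁ x).fun_inv (hne x hx)).fun_neg
    rw [integral_eq_sub_of_hasDerivAt hderiv (ContinuousOn.intervalIntegrable
      (hF₂.continuousOn.div (hF₁c.pow 2).continuousOn fun x hx => pow_ne_zero 2 (hne x hx)))]
    ring
  have hint : ∫ x in a..b, |F₂ x| / F₁ x ^ 2 ≤ |(F₁ a)⁻¹ - (F₁ b)⁻¹| := by
    rw [← hftc]
    rcases hsgn with h | h
    · rw [integral_congr fun x hx => by simp only [abs_of_nonneg (h x hx)]; rfl]
      exact le_abs_self _
    · rw [integral_congr fun x hx => by simp only [abs_of_nonpos (h x hx), neg_div]; rfl,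
        intervalIntegral.integral_neg]
      exact neg_le_abs _
  have hinv : ∀ x ∈ Icc a b, |(F₁ x)⁻¹| ≤ 1 / lam := fun x hx => by
    simpa [abs_inv] using inv_anti₀ hlam (hl x hx)
  have ha : a ∈ Icc a b := left_mem_Icc.2 hab
  have hb : b ∈ Icc a b := right_mem_Icc.2 hab
  have hdiff : |(F₁ a)⁻¹ - (F₁ b)⁻¹| ≤ 1 / lam := by
    have := abs_le.1 (hinv a ha)
    have := abs_le.1 (hinv b hb)
    rw [uIcc_of_le hab] at hne
    rcases forall_pos_or_forall_neg_of_ne_zero hF₁c.continuousOn hne with h | h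
    · have := inv_pos.2 (h a ha); have := inv_pos.2 (h b hb)
      rw [abs_sub_le_iff]; constructor <;> linarith
    · have := inv_lt_zero.2 (h a ha); have := inv_lt_zero.2 (h b hb)
      rw [abs_sub_le_iff]; constructor <;> linarith
  calc ‖∫ x in a..b, Complex.exp (Complex.I * F₀ x)‖
      ≤ 2 / lam + ∫ x in a..b, |F₂ x| / F₁ x ^ 2 :=
        norm_integral_cexp_le_add_integral_abs_div_sq hab hlam hF₀ hF₁ hF₂ hl
    _ ≤ 2 / lam + 1 / lam := by gcongr; linarith
    _ = 3 / lam := by ring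

lemma norm_integral_cexp_le_of_abs_second_deriv_le {F₀ F₁ F₂ : ℝ → ℝ} {a b lam M : ℝ}
    (hab : a ≤ b) (hlam : 0 < lam) (hF₀ : ∀ x, HasDerivAt F₀ (F₁ x) x)
    (hF₁ : ∀ x, HasDerivAt F₁ (F₂ x) x) (hF₂ : Continuous F₂)
    (hl : ∀ x ∈ Icc a b, lam ≤ |F₁ x|) (hM : ∀ x ∈ Icc a b, |F₂ x| ≤ M)
    (hMb : (b - a) * M ≤ lam) :
    ‖∫ x in a..b, Complex.exp (Complex.I * F₀ x)‖ ≤ 3 / lam := by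
  have hF₁c : Continuous F₁ := continuous_iff_continuousAt.2 fun x => (hF₁ x).continuousAt
  have hne : ∀ x ∈ uIcc a b, F₁ x ≠ 0 := fun x hx h => by
    rw [uIcc_of_le hab] at hx
    linarith [hl x hx, show |F₁ x| = 0 by simp [h]]
  have hint : ∫ x in a..b, |F₂ x| / F₁ x ^ 2 ≤ ∫ _ in a..b, M / lam ^ 2 := by
    refine integral_mono_on hab (ContinuousOn.intervalIntegrable (hF₂.abs.continuousOn.div
      (hF₁c.pow 2).continuousOn fun x hx => pow_ne_zero 2 (hne x hx))) intervalIntegrable_const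
      fun x hx => div_le_div₀ ((abs_nonneg _).trans (hM x hx)) (hM x hx) (by positivity) ?_
    simpa only [sq_abs] using pow_le_pow_left₀ hlam.le (hl x hx) 2
  have hconst : ∫ _ in a..b, M / lam ^ 2 ≤ 1 / lam := by
    rw [integral_const, smul_eq_mul, ← mul_div_assoc, div_le_div_iff₀ (by positivity) hlam]
    nlinarith
  calc ‖∫ x in a..b, Complex.exp (Complex.I * F₀ x)‖
      ≤ 2 / lam + ∫ x in a..b, |F₂ x| / F₁ x ^ 2 :=
        norm_integral_cexp_le_add_integral_abs_div_sq hab hlam hF₀ hF₁ hF₂ hl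
    _ ≤ 2 / lam + 1 / lam := by gcongr; linarith
    _ = 3 / lam := by ring

lemma mul_abs_sub_le_abs_sub_of_le_abs_deriv {g g' : ℝ → ℝ} {a b lam : ℝ}
    (hg : ∀ x, HasDerivAt g (g' x) x) (hg' : ∀ x ∈ Icc a b, lam ≤ |g' x|)
    {x y : ℝ} (hx : x ∈ Icc a b) (hy : y ∈ Icc a b) : lam * |x - y| ≤ |g x - g y| := by
  wlog hxy : x < y generalizing x y
  · rcases (not_lt.1 hxy).eq_or_lt with h | h
    · simp [h]
    · simpa only [abs_sub_comm] using this hy hx h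
  obtain ⟨ξ, hξ, hslope⟩ := exists_hasDerivAt_eq_slope g g' hxy
    (fun z _ => (hg z).continuousAt.continuousWithinAt) fun z _ => hg z
  have hξ' : ξ ∈ Icc a b := ⟨hx.1.trans hξ.1.le, hξ.2.le.trans hy.2⟩
  have hpos : 0 < y - x := sub_pos.2 hxy
  have := hg' ξ hξ'
  rw [hslope, abs_div, abs_of_pos hpos, le_div_iff₀ hpos] at this
  rwa [abs_sub_comm, abs_of_pos hpos, abs_sub_comm]

lemma exists_mul_abs_sub_le_abs {g g' : ℝ → ℝ} {a b lam : ℝ} (hab : a ≤ b)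
    (hg : ∀ x, HasDerivAt g (g' x) x) (hg' : ∀ x ∈ Icc a b, lam ≤ |g' x|) :
    ∃ c ∈ Icc a b, ∀ x ∈ Icc a b, lam * |x - c| ≤ |g x| := by
  have hgc : Continuous g := continuous_iff_continuousAt.2 fun x => (hg x).continuousAt
  obtain ⟨c, hc, hmin⟩ :=
    isCompact_Icc.exists_isMinOn (nonempty_Icc.2 hab) hgc.abs.continuousOn
  refine ⟨c, hc, fun x hx => (mul_abs_sub_le_abs_sub_of_le_abs_deriv hg hg' hx hc).trans ?_⟩
  have hcx : |g c| ≤ |g x| := hmin hx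
  by_cases hzero : g c = 0
  · simp [hzero]
  have hne : ∀ y ∈ Icc a b, g y ≠ 0 := fun y hy h => hzero (abs_eq_zero.1
    (le_antisymm (by simpa [h] using hmin hy) (abs_nonneg _)))
  rcases forall_pos_or_forall_neg_of_ne_zero hgc.continuousOn hne with h | h
  · rw [abs_of_pos (h c hc), abs_of_pos (h x hx)] at hcx
    rw [abs_of_nonneg (by linarith), abs_of_pos (h x hx)]
    linarith [h c hc]
  · rw [abs_of_neg (h c hc), abs_of_neg (h x hx)] at hcx
    rw [abs_of_nonpos (by linarith), abs_of_neg (h x hx)]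
    linarith [h c hc]

lemma norm_integral_le_of_split {f : ℝ → ℂ} {g g' : ℝ → ℝ} {a b lam δ A : ℝ} (hab : a ≤ b)
    (hlam : 0 ≤ lam) (hδ : 0 ≤ δ) (hA : 0 ≤ A) (hf : Continuous f) (hf1 : ∀ x, ‖f x‖ ≤ 1)
    (hg : ∀ x, HasDerivAt g (g' x) x) (hg' : ∀ x ∈ Icc a b, lam ≤ |g' x|)
    (hside : ∀ u v, a ≤ u → u ≤ v → v ≤ b → (∀ x ∈ Icc u v, lam * δ ≤ |g x|) →
      ‖∫ x in u..v, f x‖ ≤ A) :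
    ‖∫ x in a..b, f x‖ ≤ 2 * A + 2 * δ := by
  obtain ⟨c, hc, hcen⟩ := exists_mul_abs_sub_le_abs hab hg hg'
  set a' := max a (c - δ)
  set b' := min b (c + δ)
  have ha' : a ≤ a' := le_max_left _ _
  have ha'c : a' ≤ c := max_le hc.1 (by linarith)
  have hcb' : c ≤ b' := le_min hc.2 (by linarith)
  have hb' : b' ≤ b := min_le_left _ _
  have hfi : ∀ u v, IntervalIntegrable f MeasureTheory.volume u v :=
    fun u v => hf.intervalIntegrable u v
  have hsplit : ∫ x in a..b, f x =
      (∫ x in a..a', f x) + (∫ x in a'..b', f x) + ∫ x in b'..b, f x := by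
    rw [integral_add_adjacent_intervals (hfi _ _) (hfi _ _),
      integral_add_adjacent_intervals (hfi _ _) (hfi _ _)]
  have hfar : ∀ x ∈ Icc a b, δ ≤ |x - c| → lam * δ ≤ |g x| := fun x hx h =>
    (mul_le_mul_of_nonneg_left h hlam).trans (hcen x hx)
  have hleft : ‖∫ x in a..a', f x‖ ≤ A := by
    rcases le_total (c - δ) a with h | h
    · simp [a', max_eq_left h, hA]
    · refine hside a a' le_rfl ha' (ha'c.trans hc.2) fun x hx => hfar x
        ⟨hx.1, hx.2.trans (ha'c.trans hc.2)⟩ ?_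
      rw [abs_sub_comm, abs_of_nonneg] <;> linarith [hx.2, show a' = c - δ from max_eq_right h]
  have hright : ‖∫ x in b'..b, f x‖ ≤ A := by
    rcases le_total b (c + δ) with h | h
    · simp [b', min_eq_left h, hA]
    · refine hside b' b (hc.1.trans hcb') hb' le_rfl fun x hx => hfar x
        ⟨(hc.1.trans hcb').trans hx.1, hx.2⟩ ?_
      rw [abs_of_nonneg] <;> linarith [hx.1, show b' = c + δ from min_eq_right h]
  have hmid : ‖∫ x in a'..b', f x‖ ≤ 2 * δ := by
    refine (norm_integral_le_of_norm_le_const fun x _ => hf1 x).trans ?_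
    rw [one_mul, abs_of_nonneg (by linarith)]
    linarith [le_max_right a (c - δ), min_le_right b (c + δ)]
  rw [hsplit]
  calc ‖(∫ x in a..a', f x) + (∫ x in a'..b', f x) + ∫ x in b'..b, f x‖
      ≤ ‖∫ x in a..a', f x‖ + ‖∫ x in a'..b', f x‖ + ‖∫ x in b'..b, f x‖ := norm_add₃_le
    _ ≤ 2 * A + 2 * δ := by linarith

lemma mul_rpow_neg_one_div_add_one {lam n : ℝ} (hlam : 0 < lam) (hn : 0 < n) :
    (lam * lam ^ (-1 / (n + 1))) ^ (-1 / n) = lam ^ (-1 / (n + 1)) := by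
  have h : lam * lam ^ (-1 / (n + 1)) = lam ^ (n / (n + 1)) := by
    rw [show n / (n + 1) = 1 + -1 / (n + 1) by field_simp; ring, Real.rpow_add hlam,
      Real.rpow_one]
  rw [h, ← Real.rpow_mul hlam.le]
  congr 1
  field_simp

theorem norm_integral_cexp_le_of_le_abs_iterate_deriv (F : ℕ → ℝ → ℝ)
    (hF : ∀ i x, HasDerivAt (F i) (F (i + 1) x) x) (j : ℕ) {a b lam : ℝ} (hab : a ≤ b)
    (hlam : 0 < lam) (hl : ∀ x ∈ Icc a b, lam ≤ |F (j + 2) x|) :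
    ‖∫ x in a..b, Complex.exp (Complex.I * F 0 x)‖ ≤
      (2 ^ (j + 4) - 2) * lam ^ (-1 / ((j : ℝ) + 2)) := by
  have hFc : ∀ i, Continuous (F i) := fun i =>
    continuous_iff_continuousAt.2 fun x => (hF i x).continuousAt
  have hf : Continuous fun x => Complex.exp (Complex.I * F 0 x) := by
    have := hFc 0
    fun_prop
  have hf1 : ∀ x, ‖Complex.exp (Complex.I * F 0 x)‖ ≤ 1 := fun x => by
    simp [Complex.norm_exp]
  induction j generalizing a b lam with
  | zero =>
    rw [show ((0 : ℕ) : ℝ) + 2 = 1 + 1 by norm_num]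
    set δ := lam ^ (-1 / ((1 : ℝ) + 1))
    have hδ : 0 < δ := Real.rpow_pos_of_pos hlam _
    have hlamδ : (lam * δ)⁻¹ = δ := by
      simpa [Real.rpow_neg_one] using mul_rpow_neg_one_div_add_one hlam one_pos
    have hsgn : (∀ x ∈ Icc a b, 0 < F 2 x) ∨ (∀ x ∈ Icc a b, F 2 x < 0) :=
      forall_pos_or_forall_neg_of_ne_zero (hFc 2).continuousOn fun x hx h => by
        linarith [hl x hx, show |F 2 x| = 0 by simp [h]]
    have := norm_integral_le_of_split (A := 3 * δ) hab hlam.le hδ.le (by positivity) hf hf1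
      (hF 1) hl fun u v hau huv hvb hside => by
        rw [← hlamδ, ← div_eq_mul_inv]
        refine norm_integral_cexp_le_of_deriv_sign huv (by positivity) (hF 0) (hF 1) (hFc 2)
          hside ?_
        rcases hsgn with h | h
        · exact Or.inl fun x hx => (h x ⟨hau.trans hx.1, hx.2.trans hvb⟩).le
        · exact Or.inr fun x hx => (h x ⟨hau.trans hx.1, hx.2.trans hvb⟩).le
    norm_num
    linarith
  | succ j ih =>
    rw [show ((j + 1 : ℕ) : ℝ) + 2 = ((j : ℝ) + 2) + 1 by push_cast; ring]
    set δ := lam ^ (-1 / (((j : ℝ) + 2) + 1))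
    have hδ : 0 < δ := Real.rpow_pos_of_pos hlam _
    have := norm_integral_le_of_split (A := (2 ^ (j + 4) - 2) * δ) hab hlam.le hδ.le
      (by have : (2 : ℝ) ≤ 2 ^ (j + 4) := le_self_pow₀ (by norm_num) (by omega); positivity)
      hf hf1 (hF (j + 2)) hl fun u v _ huv _ hside => by
        have hδ' : (lam * δ) ^ (-1 / ((j : ℝ) + 2)) = δ :=
          mul_rpow_neg_one_div_add_one hlam (by positivity)
        rw [← hδ']
        exact ih huv (by positivity) hside
    calc _ ≤ _ := this
      _ = _ := by ring

lemma descFactorial_le_factorial (n i : ℕ) : n.descFactorial i ≤ n ! := by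
  rcases le_or_gt i n with h | h
  · exact (Nat.le_mul_of_pos_left _ (factorial_pos _)).trans (factorial_mul_descFactorial h).le
  · simp [descFactorial_eq_zero_iff_lt.2 h]

section Phase

variable {k : ℕ} (α : Fin k → ℝ)

noncomputable def phaseTerm (i : ℕ) (j : Fin k) (t : ℝ) : ℝ :=
  α j * ((j.1 + 1).descFactorial i : ℝ) * t ^ (j.1 + 1 - i)

noncomputable def phaseDeriv (i : ℕ) (t : ℝ) : ℝ :=
  2 * Real.pi * ∑ j, phaseTerm α i j t

lemma hasDerivAt_phaseDeriv (i : ℕ) (t : ℝ) :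
    HasDerivAt (phaseDeriv α i) (phaseDeriv α (i + 1) t) t := by
  refine (HasDerivAt.fun_sum fun j _ => ?_).const_mul (2 * Real.pi)
  refine ((hasDerivAt_pow (j.1 + 1 - i) t).const_mul _).congr_deriv ?_
  simp only [phaseTerm, descFactorial_succ, Nat.cast_mul,
    show j.1 + 1 - (i + 1) = j.1 + 1 - i - 1 by omega]
  rcases le_or_gt i (j.1 + 1) with h | h
  · push_cast [h]
    ring
  · simp [descFactorial_eq_zero_iff_lt.2 h]

lemma phaseDeriv_zero (t : ℝ) : phaseDeriv α 0 t = 2 * Real.pi * ∑ j, α j * t ^ (j.1 + 1) := by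
  simp [phaseDeriv, phaseTerm]

lemma abs_phaseTerm_le {t : ℝ} (ht : t ∈ Icc (0 : ℝ) 1) (i : ℕ) (j : Fin k) :
    |phaseTerm α i j t| ≤ k ! * |α j| := by
  have hfac : ((j.1 + 1).descFactorial i : ℝ) ≤ k ! := by
    exact_mod_cast (descFactorial_le_factorial _ _).trans (factorial_le j.isLt)
  have hpow : |t ^ (j.1 + 1 - i)| ≤ 1 := by
    rw [abs_of_nonneg (pow_nonneg ht.1 _)]
    exact pow_le_one₀ ht.1 ht.2
  rw [phaseTerm, abs_mul, abs_mul, Nat.abs_cast, mul_comm (k ! : ℝ)]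
  calc |α j| * ((j.1 + 1).descFactorial i : ℝ) * |t ^ (j.1 + 1 - i)|
      ≤ |α j| * k ! * 1 := by gcongr
    _ = |α j| * k ! := mul_one _

lemma phaseTerm_eq_zero_of_lt {i : ℕ} {j : Fin k} (h : j.1 + 1 < i) (t : ℝ) :
    phaseTerm α i j t = 0 := by
  simp [phaseTerm, descFactorial_eq_zero_iff_lt.2 h]

lemma phaseTerm_succ_self (j : Fin k) (t : ℝ) : phaseTerm α (j.1 + 1) j t = α j * (j.1 + 1) ! := by
  rw [phaseTerm, descFactorial_self, Nat.sub_self, pow_zero, mul_one]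

def IsDominant (B : ℝ) (i : Fin k) : Prop :=
  ∀ j, |α j| * B ^ j.1 ≤ |α i| * B ^ i.1

lemma exists_isDominant [Nonempty (Fin k)] (B : ℝ) : ∃ i, IsDominant α B i := by
  obtain ⟨i, -, hi⟩ := Finset.exists_max_image univ (fun j : Fin k => |α j| * B ^ j.1) univ_nonempty
  exact ⟨i, fun j => hi j (mem_univ j)⟩

variable {α} {B : ℝ} {i : Fin k}

lemma IsDominant.abs_le (hi : IsDominant α B i) (hB : 1 ≤ B) (j : Fin k) :
    |α j| ≤ |α i| * B ^ k :=
  calc |α j| ≤ |α j| * B ^ j.1 := le_mul_of_one_le_right (abs_nonneg _) (one_le_pow₀ hB)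
    _ ≤ |α i| * B ^ i.1 := hi j
    _ ≤ |α i| * B ^ k := mul_le_mul_of_nonneg_left (pow_le_pow_right₀ hB i.isLt.le) (abs_nonneg _)

lemma IsDominant.sum_abs_le (hi : IsDominant α B i) (hB : 1 ≤ B) :
    ∑ j, |α j| ≤ k * (|α i| * B ^ k) := by
  simpa using Finset.sum_le_card_nsmul univ _ _ fun j _ => hi.abs_le hB j

lemma IsDominant.mul_abs_le_of_lt (hi : IsDominant α B i) (hB : 1 ≤ B) {j : Fin k}
    (hij : i < j) : B * |α j| ≤ |α i| := by
  refine le_of_mul_le_mul_right ?_ (pow_pos (zero_lt_one.trans_le hB) i.1)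
  calc B * |α j| * B ^ i.1 = |α j| * B ^ (i.1 + 1) := by ring
    _ ≤ |α j| * B ^ j.1 := mul_le_mul_of_nonneg_left (pow_le_pow_right₀ hB hij) (abs_nonneg _)
    _ ≤ |α i| * B ^ i.1 := hi j

lemma IsDominant.abs_sum_erase_phaseTerm_le (hi : IsDominant α B i) (hB : 1 ≤ B)
    (hBk : 2 * k * k ! ≤ B) {D : ℕ} (hD : i.1 + 1 ≤ D) {t : ℝ} (ht : t ∈ Icc (0 : ℝ) 1) :
    |∑ j ∈ univ.erase i, phaseTerm α D j t| ≤ |α i| / 2 := by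
  have hB0 : 0 < B := zero_lt_one.trans_le hB
  have hterm : ∀ j ∈ univ.erase i, |phaseTerm α D j t| ≤ k ! * |α i| / B := fun j hj => by
    rcases lt_or_gt_of_ne (ne_of_mem_erase hj) with h | h
    · rw [phaseTerm_eq_zero_of_lt α (by omega), abs_zero]
      positivity
    · rw [le_div_iff₀ hB0]
      calc |phaseTerm α D j t| * B ≤ k ! * |α j| * B := by gcongr; exact abs_phaseTerm_le α ht D j
        _ = k ! * (B * |α j|) := by ring
        _ ≤ k ! * |α i| := by gcongr; exact hi.mul_abs_le_of_lt hB h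
  calc |∑ j ∈ univ.erase i, phaseTerm α D j t|
      ≤ ∑ j ∈ univ.erase i, |phaseTerm α D j t| := abs_sum_le_sum_abs _ _
    _ ≤ (univ.erase i).card • (k ! * |α i| / B) := sum_le_card_nsmul _ _ _ hterm
    _ ≤ k * (k ! * |α i| / B) := by
        rw [nsmul_eq_mul]
        gcongr
        exact_mod_cast (card_erase_le).trans (card_univ.trans (Fintype.card_fin k)).le
    _ ≤ |α i| / 2 := by
        rw [← mul_div_assoc, div_le_div_iff₀ hB0 two_pos]
        nlinarith [abs_nonneg (α i)]

lemma IsDominant.pi_mul_abs_le_abs_phaseDeriv (hi : IsDominant α B i) (hB : 1 ≤ B)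
    (hBk : 2 * k * k ! ≤ B) {t : ℝ} (ht : t ∈ Icc (0 : ℝ) 1) :
    Real.pi * |α i| ≤ |phaseDeriv α (i.1 + 1) t| := by
  have hrest := hi.abs_sum_erase_phaseTerm_le hB hBk le_rfl ht
  have hlead : |α i| ≤ |phaseTerm α (i.1 + 1) i t| := by
    rw [phaseTerm_succ_self, abs_mul, Nat.abs_cast]
    exact le_mul_of_one_le_right (abs_nonneg _) (by exact_mod_cast (i.1 + 1).factorial_pos)
  have hsum : |α i| / 2 ≤ |∑ j, phaseTerm α (i.1 + 1) j t| := by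
    rw [← add_sum_erase _ _ (mem_univ i)]
    linarith [abs_sub_abs_le_abs_add (phaseTerm α (i.1 + 1) i t)
      (∑ j ∈ univ.erase i, phaseTerm α (i.1 + 1) j t)]
  rw [phaseDeriv, abs_mul, abs_of_pos Real.two_pi_pos]
  nlinarith [Real.pi_pos]

lemma IsDominant.abs_phaseDeriv_two_le (hi : IsDominant α B i) (hB : 1 ≤ B)
    (hBk : 2 * k * k ! ≤ B) (hi0 : i.1 = 0) {t : ℝ} (ht : t ∈ Icc (0 : ℝ) 1) :
    |phaseDeriv α 2 t| ≤ Real.pi * |α i| := by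
  have hrest := hi.abs_sum_erase_phaseTerm_le hB hBk (D := 2) (by omega) ht
  rw [phaseDeriv, ← add_sum_erase _ _ (mem_univ i), phaseTerm_eq_zero_of_lt α (by omega), zero_add,
    abs_mul, abs_of_pos Real.two_pi_pos]
  nlinarith [Real.pi_pos]

lemma rpow_neg_one_div_le_of_le {a : ℝ} (ha : 1 ≤ a) {d k : ℕ} (hd : 0 < d) (hdk : d ≤ k) :
    a ^ (-1 / (d : ℝ)) ≤ a ^ (-1 / (k : ℝ)) := by
  refine Real.rpow_le_rpow_of_exponent_le ha ?_
  rw [neg_div, neg_div, neg_le_neg_iff]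
  exact one_div_le_one_div_of_le (by exact_mod_cast hd) (by exact_mod_cast hdk)

lemma IsDominant.norm_integral_le (hi : IsDominant α B i) (hB : 1 ≤ B) (hBk : 2 * k * k ! ≤ B)
    (hα : 1 ≤ |α i|) :
    ‖∫ t in (0 : ℝ)..1, Complex.exp (Complex.I * phaseDeriv α 0 t)‖ ≤
      2 ^ (k + 3) * |α i| ^ (-1 / (k : ℝ)) := by
  have hlam : 0 < Real.pi * |α i| := by positivity
  have hl := fun t (ht : t ∈ Icc (0 : ℝ) 1) => hi.pi_mul_abs_le_abs_phaseDeriv hB hBk ht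
  refine le_trans ?_ (mul_le_mul_of_nonneg_left
    (rpow_neg_one_div_le_of_le hα (d := i.1 + 1) (by omega) i.isLt) (by positivity))
  have ha : 0 < |α i| := zero_lt_one.trans_le hα
  obtain ⟨_ | m, hm⟩ := i
  · have hM := fun t (ht : t ∈ Icc (0 : ℝ) 1) => hi.abs_phaseDeriv_two_le hB hBk rfl ht
    calc _ ≤ 3 / (Real.pi * |α ⟨0, hm⟩|) :=
          norm_integral_cexp_le_of_abs_second_deriv_le zero_le_one hlam
            (hasDerivAt_phaseDeriv α 0) (hasDerivAt_phaseDeriv α 1)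
            (continuous_iff_continuousAt.2 fun t => (hasDerivAt_phaseDeriv α 2 t).continuousAt)
            hl hM (by linarith)
      _ ≤ 1 * |α ⟨0, hm⟩|⁻¹ := by
          rw [div_le_iff₀ hlam, one_mul, show |α ⟨0, hm⟩|⁻¹ * (Real.pi * |α ⟨0, hm⟩|) = Real.pi by
            field_simp]
          linarith [Real.pi_gt_three]
      _ ≤ 2 ^ (k + 3) * |α ⟨0, hm⟩| ^ (-1 / ((0 + 1 : ℕ) : ℝ)) := by
          rw [zero_add, Nat.cast_one, div_one, Real.rpow_neg_one]
          gcongr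
          exact one_le_pow₀ one_le_two
  · calc _ ≤ (2 ^ (m + 4) - 2) * (Real.pi * |α ⟨m + 1, hm⟩|) ^ (-1 / ((m : ℝ) + 2)) :=
          norm_integral_cexp_le_of_le_abs_iterate_deriv (phaseDeriv α) (hasDerivAt_phaseDeriv α) m
            zero_le_one hlam hl
      _ ≤ 2 ^ (k + 3) * |α ⟨m + 1, hm⟩| ^ (-1 / ((m + 1 + 1 : ℕ) : ℝ)) := by
          rw [show ((m + 1 + 1 : ℕ) : ℝ) = m + 2 by push_cast; ring]
          gcongr ?_ * ?_
          · linarith [pow_le_pow_right₀ (one_le_two : (1 : ℝ) ≤ 2) (show m + 4 ≤ k + 3 by omega)]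
          · exact Real.rpow_le_rpow_of_nonpos ha
              (le_mul_of_one_le_left ha.le (by linarith [Real.pi_gt_three]))
              (div_nonpos_of_nonpos_of_nonneg (by norm_num) (by positivity))

end Phase

lemma rpow_neg_one_div_le_mul_rpow {x y M : ℝ} (k : ℕ) (hx : 0 < x) (hy : 0 < y) (hM : 1 ≤ M)
    (hyx : y ≤ M * x) : x ^ (-1 / (k : ℝ)) ≤ M * y ^ (-1 / (k : ℝ)) := by
  have he : -1 / (k : ℝ) ≤ 0 := div_nonpos_of_nonpos_of_nonneg (by norm_num) k.cast_nonneg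
  have he' : -1 ≤ -1 / (k : ℝ) := by
    rcases k.eq_zero_or_pos with rfl | hk
    · simp
    · rw [neg_div, neg_le_neg_iff]
      exact div_le_one_of_le₀ (by exact_mod_cast hk) k.cast_nonneg
  have hMinv : M⁻¹ ≤ M ^ (-1 / (k : ℝ)) := by
    simpa [Real.rpow_neg_one] using Real.rpow_le_rpow_of_exponent_le hM he'
  calc x ^ (-1 / (k : ℝ)) = M * (M⁻¹ * x ^ (-1 / (k : ℝ))) := by
        field_simp
    _ ≤ M * (M ^ (-1 / (k : ℝ)) * x ^ (-1 / (k : ℝ))) := by gcongr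
    _ = M * (M * x) ^ (-1 / (k : ℝ)) := by
        rw [Real.mul_rpow (by linarith) hx.le]
    _ ≤ M * y ^ (-1 / (k : ℝ)) :=
        mul_le_mul_of_nonneg_left (Real.rpow_le_rpow_of_nonpos hy hyx he) (by linarith)

theorem norm_integral_cexp_phaseDeriv_le {k : ℕ} (α : Fin k → ℝ) :
    ‖∫ t in (0 : ℝ)..1, Complex.exp (Complex.I * phaseDeriv α 0 t)‖ ≤
      2 ^ (k + 3) * (1 + k * (2 * (k + 1)! : ℝ) ^ k) * (1 + ∑ j, |α j|) ^ (-1 / (k : ℝ)) := by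
  set B : ℝ := 2 * (k + 1)!
  have hB : 1 ≤ B := by
    have : (1 : ℝ) ≤ (k + 1)! := by exact_mod_cast (k + 1).factorial_pos
    linarith
  have hBk : 2 * k * k ! ≤ B := by
    have : (k + 1)! = (k + 1) * k ! := factorial_succ k
    simp only [B]
    push_cast [this]
    nlinarith [Nat.cast_nonneg (α := ℝ) k !]
  set M : ℝ := 1 + k * B ^ k
  have hM : 1 ≤ M := le_add_of_nonneg_right (by positivity)
  have hS : 0 < 1 + ∑ j, |α j| := by positivity
  have htriv : ‖∫ t in (0 : ℝ)..1, Complex.exp (Complex.I * phaseDeriv α 0 t)‖ ≤ 1 := by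
    simpa using norm_integral_le_of_norm_le_const (a := 0) (b := 1) (C := 1)
      fun t _ => by rw [mul_comm]; exact (Complex.norm_exp_ofReal_mul_I _).le
  suffices ∃ A, 0 < A ∧ 1 + ∑ j, |α j| ≤ M * A ∧
      ‖∫ t in (0 : ℝ)..1, Complex.exp (Complex.I * phaseDeriv α 0 t)‖ ≤
        2 ^ (k + 3) * A ^ (-1 / (k : ℝ)) by
    obtain ⟨A, hA, hSA, hbound⟩ := this
    rw [mul_assoc]
    exact hbound.trans (by gcongr; exact rpow_neg_one_div_le_mul_rpow k hA hS hM hSA)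
  have htriv' : ‖∫ t in (0 : ℝ)..1, Complex.exp (Complex.I * phaseDeriv α 0 t)‖ ≤
      2 ^ (k + 3) * 1 ^ (-1 / (k : ℝ)) := by
    rw [Real.one_rpow, mul_one]
    exact htriv.trans (one_le_pow₀ one_le_two)
  rcases isEmpty_or_nonempty (Fin k) with hk | hk
  · exact ⟨1, one_pos, by simpa using hM, htriv'⟩
  obtain ⟨i, hi⟩ := exists_isDominant α B
  have hsum := hi.sum_abs_le hB
  by_cases hα : 1 ≤ |α i|
  · refine ⟨|α i|, zero_lt_one.trans_le hα, ?_, hi.norm_integral_le hB hBk hα⟩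
    simp only [M]
    nlinarith
  · refine ⟨1, one_pos, ?_, htriv'⟩
    simp only [M]
    nlinarith [pow_pos (zero_lt_one.trans_le hB) k]

lemma integral_cexp_poly_eq_smul {k : ℕ} (β : Fin k → ℝ) (N : ℝ) :
    ∫ x in (0 : ℝ)..N,
        Complex.exp ((2 * Real.pi * Complex.I) * ((∑ j : Fin k, β j * x ^ (j.1 + 1) : ℝ) : ℂ)) =
      N • ∫ t in (0 : ℝ)..1,
        Complex.exp (Complex.I * phaseDeriv (fun j => β j * N ^ (j.1 + 1)) 0 t) := by
  set α : Fin k → ℝ := fun j => β j * N ^ (j.1 + 1)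
  have h : ∀ t : ℝ, Complex.exp (Complex.I * phaseDeriv α 0 t) =
      Complex.exp ((2 * Real.pi * Complex.I) *
        ((∑ j : Fin k, β j * (N * t) ^ (j.1 + 1) : ℝ) : ℂ)) := fun t => by
    have : phaseDeriv α 0 t = 2 * Real.pi * ∑ j : Fin k, β j * (N * t) ^ (j.1 + 1) := by
      rw [phaseDeriv_zero]
      exact congrArg _ (sum_congr rfl fun j _ => by simp only [α]; ring)
    rw [this]
    congr 1
    push_cast
    ring
  simp_rw [h]
  have := smul_integral_comp_mul_left (a := 0) (b := 1) (fun x : ℝ => Complex.exp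
    ((2 * Real.pi * Complex.I) * ((∑ j : Fin k, β j * x ^ (j.1 + 1) : ℝ) : ℂ))) N
  rw [mul_zero, mul_one] at this
  exact this.symm

theorem stmt_18_general (k : ℕ) :
    ∃ C : ℝ, 0 < C ∧ ∀ (β : Fin k → ℝ) (N : ℕ), 0 < N →
      ‖∫ x in (0 : ℝ)..(N : ℝ),
          Complex.exp ((2 * Real.pi * Complex.I) *
            ((∑ j : Fin k, β j * x ^ (j.1 + 1) : ℝ) : ℂ))‖ ≤
        C * N * (1 + ∑ j : Fin k, (N : ℝ) ^ (j.1 + 1) * |β j|) ^ (-(1 : ℝ) / k) := by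
  refine ⟨2 ^ (k + 3) * (1 + k * (2 * (k + 1)! : ℝ) ^ k), by positivity, fun β N _ => ?_⟩
  have hsum : ∑ j : Fin k, (N : ℝ) ^ (j.1 + 1) * |β j| = ∑ j : Fin k, |β j * N ^ (j.1 + 1)| := by
    simp [abs_mul, mul_comm]
  rw [integral_cexp_poly_eq_smul, norm_smul, Real.norm_natCast, hsum, mul_comm _ (N : ℝ),
    mul_assoc]
  gcongr
  exact norm_integral_cexp_phaseDeriv_le _

/-- **Oscillatory integral (van der Corput) estimate.** For
`v_N(β) = ∫_0^N e^{2πi(β₁x + β₂x² + ⋯ + β_k x^k)} dx` one has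
`|v_N(β)| ≤ C N (1 + ∑_j N^j|β_j|)^(-1/k)`. -/
theorem stmt_18 (k : ℕ) (hk : 2 ≤ k) :
    ∃ C : ℝ, 0 < C ∧ ∀ (β : Fin k → ℝ) (N : ℕ), 0 < N →
      ‖∫ x in (0 : ℝ)..(N : ℝ),
          Complex.exp ((2 * Real.pi * Complex.I) *
            ((∑ j : Fin k, β j * x ^ (j.1 + 1) : ℝ) : ℂ))‖ ≤
        C * N * (1 + ∑ j : Fin k, (N : ℝ) ^ (j.1 + 1) * |β j|) ^ (-(1 : ℝ) / k) :=
  stmt_18_general k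
end
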